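/- For any ideal 𝔞 of a commutative semiring S, 𝔞 is a z-ideal if and only if 𝔞 is z-radical, i.e., 𝔞 = ᶻ√𝔞. -/

import Mathlib

/-!
A z-ideal `a` is radical, and every minimal prime `p` over it is again a z-ideal: for `x ∈ p`
there are `y ∉ p` and `n` with `y * x ^ n ∈ a`, and if `z` lies in every maximal ideal containing
`x`, then `y * z` lies in every maximal ideal containing `y * x ^ n`, so `y * z ∈ a ⊆ p`.
Hence `a = √a`, the intersection of its minimal primes, is cut out by prime z-ideals.
Conversely, intersections of z-ideals are z-ideals, so `ᶻ√a` is always a z-ideal.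
-/

/-- An ideal `I` of a commutative semiring is a *z-ideal* if for every `x ∈ I`,
the intersection of all maximal ideals containing `x` is contained in `I`. -/
def IsZIdeal {S : Type*} [CommSemiring S] (I : Ideal S) : Prop :=
  ∀ x ∈ I, sInf {m : Ideal S | m.IsMaximal ∧ x ∈ m} ≤ I

/-- The *z-radical* of an ideal: the intersection of all prime z-ideals containing it. -/
def zRadical {S : Type*} [CommSemiring S] (a : Ideal S) : Ideal S :=
  sInf {p : Ideal S | p.IsPrime ∧ IsZIdeal p ∧ a ≤ p}

section

variable {S : Type*} [CommSemiring S]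

theorem Ideal.exists_mul_pow_mem_of_mem_minimalPrimes {a p : Ideal S}
    (hp : p ∈ a.minimalPrimes) {x : S} (hx : x ∈ p) :
    ∃ y ∉ p, ∃ n : ℕ, y * x ^ n ∈ a := by
  have := hp.isPrime
  -- Otherwise a prime over `a` avoiding `(S \ p) · xᴺ` would lie in `p` but miss `x`.
  by_contra! h
  have hdisj : Disjoint (a : Set S) ↑(p.primeCompl ⊔ Submonoid.powers x) := by
    refine Set.disjoint_right.mpr fun z hz => ?_
    obtain ⟨y, hy, _, ⟨n, rfl⟩, rfl⟩ := Submonoid.mem_sup.mp hz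
    exact h y hy n
  obtain ⟨q, hq, haq, hqd⟩ := Ideal.exists_le_prime_disjoint a _ hdisj
  have hqp : q ≤ p := fun z hzq => by_contra fun hzp =>
    Set.disjoint_left.mp hqd hzq (Submonoid.mem_sup_left hzp)
  exact Set.disjoint_left.mp hqd (hp.2 ⟨hq, haq⟩ hqp hx)
    (Submonoid.mem_sup_right (Submonoid.mem_powers x))

theorem IsZIdeal.isRadical {a : Ideal S} (ha : IsZIdeal a) : a.IsRadical := by
  rintro x ⟨n, hn⟩
  exact ha _ hn <| Ideal.mem_sInf.mpr fun m ⟨hm, hxm⟩ => hm.isPrime.mem_of_pow_mem n hxm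

theorem IsZIdeal.of_mem_minimalPrimes {a p : Ideal S} (ha : IsZIdeal a)
    (hp : p ∈ a.minimalPrimes) : IsZIdeal p := by
  intro x hx z hz
  obtain ⟨y, hyp, n, hya⟩ := Ideal.exists_mul_pow_mem_of_mem_minimalPrimes hp hx
  have hyz : y * z ∈ a := ha _ hya <| Ideal.mem_sInf.mpr fun m ⟨hm, hm'⟩ =>
    (hm.isPrime.mem_or_mem hm').elim (m.mul_mem_right z) fun hxn =>
      m.mul_mem_left y (Ideal.mem_sInf.mp hz ⟨hm, hm.isPrime.mem_of_pow_mem n hxn⟩)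
  exact (hp.isPrime.mem_or_mem (hp.le hyz)).resolve_left hyp

theorem isZIdeal_sInf {s : Set (Ideal S)} (hs : ∀ I ∈ s, IsZIdeal I) : IsZIdeal (sInf s) :=
  fun x hx => le_sInf fun I hI => hs I hI x (Ideal.mem_sInf.mp hx hI)

theorem isZIdeal_zRadical (a : Ideal S) : IsZIdeal (zRadical a) :=
  isZIdeal_sInf fun _ hp => hp.2.1

theorem le_zRadical (a : Ideal S) : a ≤ zRadical a :=
  le_sInf fun _ hp => hp.2.2

theorem IsZIdeal.zRadical_le_radical {a : Ideal S} (ha : IsZIdeal a) :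
    zRadical a ≤ a.radical := by
  rw [← Ideal.sInf_minimalPrimes]
  exact sInf_le_sInf fun p hp => ⟨hp.isPrime, ha.of_mem_minimalPrimes hp, hp.le⟩

end

theorem isZIdeal_iff_zRadical {S : Type*} [CommSemiring S] (a : Ideal S) :
    IsZIdeal a ↔ zRadical a = a := by
  refine ⟨fun ha => le_antisymm ?_ (le_zRadical a), fun h => h ▸ isZIdeal_zRadical a⟩
  calc zRadical a ≤ a.radical := ha.zRadical_le_radical
    _ = a := ha.isRadical.radical
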